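/- Let A be SPD and suppose a solver computes, for any right-hand side z, an approximation v' to v = A^{-1} z with ‖v' - v‖_A ≤ ε‖v‖_A. Define iteratively v₁' as the solver output for A^{-1}f and v_{j+1}' as the solver output applied to right-hand side v_j'. Then ‖v_β' - A^{-β} f‖_A ≤ a_β ε ‖A^{-β} f‖_A, where a₁ = 1 and a_{β+1} = 1 + (1+ε) k(A) a_β. Consequently a_β = O(k(A)^{β-1}). -/

import Mathlib

/-!
Write `T = A⁻¹` and let `e = v - u` be the error of the previous step. The new error `S v - T u`
splits into the solver's own error at `v`, of size `≤ ε ‖T v‖_A ≤ ε (‖T u‖_A + ‖T e‖_A)`, and the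
propagated error `T e`. In the `A`-norm `‖T w‖ ≤ λ_min⁻¹ ‖w‖` and `‖w‖ ≤ λ_max ‖T w‖`, so the
error grows by at most `(1 + ε) k(A) a_β ε ‖T u‖_A`, which is the recursion for `a_β`.
Unrolling it with `(1 + ε) k(A) ≥ 1` gives `a_β ≤ β ((1 + ε) k(A))^(β - 1)`.
-/

open Matrix Real

/-- Spectral real power of an SPD matrix given by `A = W D Wᵀ`: `A^γ := W D^γ Wᵀ`. -/
noncomputable def matPow {N : ℕ} (W : Matrix (Fin N) (Fin N) ℝ) (D : Fin N → ℝ) (γ : ℝ) :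
    Matrix (Fin N) (Fin N) ℝ :=
  W * Matrix.diagonal (fun i => D i ^ γ) * Wᵀ

/-- The norm `‖v‖_{A^γ} = sqrt (vᵀ A^γ v)`. -/
noncomputable def wnorm {N : ℕ} (W : Matrix (Fin N) (Fin N) ℝ) (D : Fin N → ℝ) (γ : ℝ)
    (v : Fin N → ℝ) : ℝ :=
  Real.sqrt (v ⬝ᵥ (matPow W D γ).mulVec v)

theorem EuclideanSpace.norm_le_mul_norm_of_forall {ι : Type*} [Fintype ι]
    {x y : EuclideanSpace ℝ ι} {C : ℝ} (hC : 0 ≤ C) (h : ∀ i, ‖y i‖ ≤ C * ‖x i‖) :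
    ‖y‖ ≤ C * ‖x‖ := by
  refine (pow_le_pow_iff_left₀ (norm_nonneg y) (by positivity) two_ne_zero).mp ?_
  rw [mul_pow, EuclideanSpace.norm_sq_eq, EuclideanSpace.norm_sq_eq, Finset.mul_sum]
  gcongr with i
  rw [← mul_pow]
  exact pow_le_pow_left₀ (norm_nonneg _) (h i) 2

section SolverError

variable {E : Type*} [AddCommGroup E] (p : AddGroupSeminorm E) (T : E →+ E) (S : E → E)
  {ε c C : ℝ}

theorem AddGroupSeminorm.solver_sub_map_le_of_sub_le (hε : 0 ≤ ε) (hc0 : 0 ≤ c)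
    (hc : ∀ w, p (T w) ≤ c * p w) (hC : ∀ w, p w ≤ C * p (T w))
    (hS : ∀ z, p (S z - T z) ≤ ε * p (T z)) {α : ℝ} (hα : 0 ≤ α) {u v : E}
    (h : p (v - u) ≤ α * ε * p u) :
    p (S v - T u) ≤ (1 + (1 + ε) * (c * C) * α) * ε * p (T u) := by
  have hTv : p (T v) ≤ p (T u) + c * p (v - u) := by
    calc p (T v) = p (T u + T (v - u)) := by rw [map_sub T, add_sub_cancel]
      _ ≤ p (T u) + c * p (v - u) := (map_add_le_add p _ _).trans (by gcongr; exact hc _)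
  have hvu : p (v - u) ≤ α * ε * (C * p (T u)) :=
    h.trans (mul_le_mul_of_nonneg_left (hC u) (by positivity))
  calc p (S v - T u) = p ((S v - T v) + T (v - u)) := by rw [map_sub T, sub_add_sub_cancel]
    _ ≤ ε * p (T v) + c * p (v - u) :=
        (map_add_le_add p _ _).trans (add_le_add (hS v) (hc _))
    _ ≤ ε * (p (T u) + c * p (v - u)) + c * p (v - u) := by gcongr
    _ = ε * p (T u) + (1 + ε) * c * p (v - u) := by ring
    _ ≤ ε * p (T u) + (1 + ε) * c * (α * ε * (C * p (T u))) := by gcongr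
    _ = (1 + (1 + ε) * (c * C) * α) * ε * p (T u) := by ring

end SolverError

section AffineRecursion

variable {a : ℕ → ℝ} {x : ℝ}

theorem one_le_of_eq_one_add_mul (ha1 : a 1 = 1) (haS : ∀ b, 1 ≤ b → a (b + 1) = 1 + x * a b)
    (hx : 0 ≤ x) {β : ℕ} (hβ : 1 ≤ β) : 1 ≤ a β := by
  induction β, hβ using Nat.le_induction with
  | base => exact ha1.ge
  | succ b hb ih => rw [haS b hb]; nlinarith

theorem le_mul_pow_pred_of_eq_one_add_mul (ha1 : a 1 = 1)
    (haS : ∀ b, 1 ≤ b → a (b + 1) = 1 + x * a b) (hx : 1 ≤ x) {β : ℕ} (hβ : 1 ≤ β) :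
    a β ≤ β * x ^ (β - 1) := by
  induction β, hβ using Nat.le_induction with
  | base => simp [ha1]
  | succ b hb ih =>
    obtain ⟨k, rfl⟩ := Nat.exists_eq_add_of_le' hb
    rw [haS _ hb]
    simp only [Nat.add_sub_cancel] at ih ⊢
    push_cast at ih ⊢
    calc 1 + x * a (k + 1) ≤ x ^ (k + 1) + x * ((k + 1) * x ^ k) := by
          gcongr
          exact one_le_pow₀ hx
      _ = (k + 1 + 1) * x ^ (k + 1) := by ring

end AffineRecursion

section Spectral

variable {N : ℕ} (W : Matrix (Fin N) (Fin N) ℝ) (D : Fin N → ℝ)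

/-- Coordinates in the eigenbasis scaled by `√D`: an isometry from the `A`-norm onto the
Euclidean norm. -/
noncomputable def eigenCoords : (Fin N → ℝ) →+ EuclideanSpace ℝ (Fin N) :=
  AddMonoidHom.mk' (fun v => WithLp.toLp 2 fun i => √(D i) * (Wᵀ *ᵥ v) i) fun u v => by
    ext i
    simp [mulVec_add, mul_add]

noncomputable def energySeminorm : AddGroupSeminorm (Fin N → ℝ) :=
  (normAddGroupSeminorm _).comp (eigenCoords W D)

variable {W D}

theorem eigenCoords_matPow_mulVec (hW : Wᵀ * W = 1) (γ : ℝ) (v : Fin N → ℝ) (i : Fin N) :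
    eigenCoords W D (matPow W D γ *ᵥ v) i = D i ^ γ * eigenCoords W D v i := by
  simp only [eigenCoords, AddMonoidHom.mk'_apply, matPow, mulVec_mulVec, ← Matrix.mul_assoc, hW,
    Matrix.one_mul]
  rw [← mulVec_mulVec, mulVec_diagonal]
  ring

theorem matPow_mul_matPow (hW : Wᵀ * W = 1) (hD : ∀ i, 0 < D i) (γ δ : ℝ) :
    matPow W D γ * matPow W D δ = matPow W D (γ + δ) := by
  simp only [matPow, Matrix.mul_assoc]
  rw [← Matrix.mul_assoc Wᵀ W, hW, Matrix.one_mul, ← Matrix.mul_assoc (diagonal _),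
    diagonal_mul_diagonal]
  simp only [← rpow_add (hD _)]

theorem matPow_zero (hW : Wᵀ * W = 1) : matPow W D 0 = 1 := by
  simp [matPow, mul_eq_one_comm.mp hW]

theorem energySeminorm_apply (hD : ∀ i, 0 < D i) (v : Fin N → ℝ) :
    energySeminorm W D v = wnorm W D 1 v := by
  change ‖eigenCoords W D v‖ = _
  rw [wnorm, EuclideanSpace.norm_eq, matPow, ← mulVec_mulVec, ← mulVec_mulVec, dotProduct_mulVec,
    ← mulVec_transpose]
  congr 1
  simp only [eigenCoords, AddMonoidHom.mk'_apply, rpow_one, mulVec_diagonal, dotProduct,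
    norm_mul, mul_pow, sq_abs, norm_eq_abs, sq_sqrt (hD _).le]
  exact Finset.sum_congr rfl fun i _ => by ring

theorem energySeminorm_matPow_mulVec_le (hW : Wᵀ * W = 1) (hD : ∀ i, 0 < D i) {γ c : ℝ}
    (hc : 0 ≤ c) (h : ∀ i, D i ^ γ ≤ c) (v : Fin N → ℝ) :
    energySeminorm W D (matPow W D γ *ᵥ v) ≤ c * energySeminorm W D v := by
  refine EuclideanSpace.norm_le_mul_norm_of_forall hc fun i => ?_
  rw [eigenCoords_matPow_mulVec hW, norm_mul, norm_of_nonneg (rpow_nonneg (hD i).le _)]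
  gcongr
  exact h i

theorem energySeminorm_matPow_neg_one_mulVec_le (hW : Wᵀ * W = 1) (hD : ∀ i, 0 < D i)
    (v : Fin N → ℝ) :
    energySeminorm W D (matPow W D (-1) *ᵥ v) ≤ (⨅ i, D i)⁻¹ * energySeminorm W D v := by
  refine energySeminorm_matPow_mulVec_le hW hD (inv_nonneg.mpr (iInf_nonneg fun i => (hD i).le))
    (fun i => ?_) v
  have : Nonempty (Fin N) := ⟨i⟩
  obtain ⟨j, hj⟩ := exists_eq_ciInf_of_finite (f := D)
  rw [rpow_neg_one, ← hj]
  exact inv_anti₀ (hD j) (hj ▸ ciInf_le (Set.finite_range D).bddBelow i)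

theorem energySeminorm_le_iSup_mul_matPow_neg_one_mulVec (hW : Wᵀ * W = 1) (hD : ∀ i, 0 < D i)
    (v : Fin N → ℝ) :
    energySeminorm W D v ≤ (⨆ i, D i) * energySeminorm W D (matPow W D (-1) *ᵥ v) := by
  have hv : v = matPow W D 1 *ᵥ (matPow W D (-1) *ᵥ v) := by
    rw [mulVec_mulVec, matPow_mul_matPow hW hD, add_neg_cancel, matPow_zero hW, one_mulVec]
  conv_lhs => rw [hv]
  refine energySeminorm_matPow_mulVec_le hW hD (iSup_nonneg fun i => (hD i).le) (fun i => ?_) _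
  rw [rpow_one]
  exact le_ciSup (Set.finite_range D).bddAbove i

end Spectral

/-- Iterated inexact inversion: a solver with relative `A`-norm accuracy `ε` applied `β`
times to compute `A^{-β} f` produces an error `≤ a_β ε ‖A^{-β} f‖_A`, where `a₁ = 1`,
`a_{β+1} = 1 + (1+ε) k(A) a_β`; consequently `a_β = O(k(A)^{β-1})`. -/
theorem stmt7 {N : ℕ} [NeZero N] (W : Matrix (Fin N) (Fin N) ℝ) (D : Fin N → ℝ)
    (hW : Wᵀ * W = 1) (hD : ∀ i, 0 < D i)
    (ε : ℝ) (hε : 0 < ε)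
    (solver : (Fin N → ℝ) → (Fin N → ℝ))
    (hsolver : ∀ zz : Fin N → ℝ,
      wnorm W D 1 (solver zz - (matPow W D (-1)).mulVec zz) ≤
        ε * wnorm W D 1 ((matPow W D (-1)).mulVec zz))
    (kA : ℝ) (hkA : kA = (⨆ i, D i) / (⨅ i, D i))
    (f : Fin N → ℝ)
    (vs : ℕ → Fin N → ℝ) (hvs1 : vs 1 = solver f)
    (hvsS : ∀ j, 1 ≤ j → vs (j + 1) = solver (vs j))
    (a : ℕ → ℝ) (ha1 : a 1 = 1)
    (haS : ∀ b, 1 ≤ b → a (b + 1) = 1 + (1 + ε) * kA * a b) :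
    (∀ β, 1 ≤ β →
      wnorm W D 1 (vs β - (matPow W D (-(β : ℝ))).mulVec f) ≤
        a β * ε * wnorm W D 1 ((matPow W D (-(β : ℝ))).mulVec f)) ∧
    (∀ β, 1 ≤ β → a β ≤ (β : ℝ) * ((1 + ε) * kA) ^ (β - 1)) := by
  simp only [← energySeminorm_apply hD] at hsolver ⊢
  have hkA1 : 1 ≤ kA := by
    obtain ⟨j, hj⟩ := exists_eq_ciInf_of_finite (f := D)
    rw [hkA, one_le_div (hj ▸ hD j)]
    exact ciInf_le_ciSup (Set.finite_range D).bddBelow (Set.finite_range D).bddAbove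
  have hx : 1 ≤ (1 + ε) * kA := by nlinarith
  refine ⟨fun β hβ => ?_, fun β hβ => le_mul_pow_pred_of_eq_one_add_mul ha1 haS hx hβ⟩
  induction β, hβ using Nat.le_induction with
  | base => simpa [hvs1, ha1] using hsolver f
  | succ β hβ ih =>
    have hpow : matPow W D (-((β + 1 : ℕ) : ℝ)) *ᵥ f =
        matPow W D (-1) *ᵥ (matPow W D (-β) *ᵥ f) := by
      rw [mulVec_mulVec, matPow_mul_matPow hW hD]
      congr 3
      push_cast
      ring
    rw [hvsS β hβ, haS β hβ, hpow, hkA, div_eq_inv_mul]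
    exact (energySeminorm W D).solver_sub_map_le_of_sub_le
      (matPow W D (-1)).mulVecLin.toAddMonoidHom solver hε.le
      (inv_nonneg.mpr (iInf_nonneg fun i => (hD i).le))
      (energySeminorm_matPow_neg_one_mulVec_le hW hD)
      (energySeminorm_le_iSup_mul_matPow_neg_one_mulVec hW hD) hsolver
      (zero_le_one.trans (one_le_of_eq_one_add_mul ha1 haS (by linarith) hβ)) ih
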